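/- Let u ∈ {0,1}^r be a 0-1 vector and let ξ^u = ξ_1^{u_1}·ξ_2^{u_2}⋯ξ_r^{u_r} be the corresponding monomial in Jucys–Murphy elements. Then the product √(ξ^u) := (1)^{u_1}·(T_1)^{u_2}·(T_2T_1)^{u_3}⋯(T_{r−1}⋯T_1)^{u_r} is reduced, so that √(ξ^u) = T_{σ(u)} for a unique permutation σ(u), and ξ^u = T_{σ(u)} · T_{σ(u)⁻¹}. More generally, for a composition I of n and a sequence uu of 0-1 vectors compatible with I, the direct product ξ^{uu} of such monomials in H(S_I) satisfies ξ^{uu} = T_{σ(uu)} · T_{σ(uu)⁻¹} for the corresponding permutation σ(uu) ∈ S_I. -/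

import Mathlib

open scoped BigOperators
open Finset

namespace HeckePaper

noncomputable section

/-- The Coxeter length of a permutation of `Fin n`, i.e. its number of inversions. -/
def len {n : ℕ} (w : Equiv.Perm (Fin n)) : ℕ :=
  (Finset.univ.filter fun p : Fin n × Fin n => p.1 < p.2 ∧ w p.2 < w p.1).card

/-- The adjacent transposition exchanging `i` and `i+1` (`0`-based), i.e. the
Coxeter generator `s_{i+1} = T_{i+1}` in the (1-based) notation of the paper;
defined to be `1` when out of range. -/
def adj (n i : ℕ) : Equiv.Perm (Fin n) :=
  if h : i + 1 < n then Equiv.swap ⟨i, by omega⟩ ⟨i + 1, h⟩ else 1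

/-- The q-integer `[k] = (q^k - q^{-k})/(q - q⁻¹) = q^{k-1} + q^{k-3} + ⋯ + q^{1-k}`. -/
def qint {R : Type} [CommRing R] (q : Rˣ) (k : ℤ) : R :=
  if 0 ≤ k then ∑ j ∈ Finset.range k.toNat, ((q ^ (k - 1 - 2 * (j : ℤ)) : Rˣ) : R)
  else - ∑ j ∈ Finset.range (-k).toNat, ((q ^ (-k - 1 - 2 * (j : ℤ)) : Rˣ) : R)

/-- `Q = q - q⁻¹`. -/
def Qv (R : Type) [CommRing R] (q : Rˣ) : R := (q : R) - ((q⁻¹ : Rˣ) : R)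

/-- A realization of the Hecke algebra `H_n` of the symmetric group `S_n` over `R`:
an `R`-algebra `H` with a basis `{T_w : w ∈ S_n}` such that `T_u T_v = T_{uv}`
whenever lengths add, and the Hecke quadratic relations
`T_i² = (q - q⁻¹) T_i + 1` hold for the generators. -/
structure HeckeAlgebra (n : ℕ) (R : Type) [CommRing R] (q : Rˣ) (H : Type)
    [Ring H] [Algebra R H] where
  T : Equiv.Perm (Fin n) → H
  basis : Module.Basis (Equiv.Perm (Fin n)) R H
  basis_eq : ∀ w, basis w = T w
  T_one : T 1 = 1
  T_mul : ∀ u v : Equiv.Perm (Fin n), len (u * v) = len u + len v →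
    T u * T v = T (u * v)
  T_sq : ∀ i : ℕ, i + 1 < n →
    T (adj n i) * T (adj n i) = Qv R q • T (adj n i) + 1

/-- The Young subgroup `S_I` of `S_n` associated with a composition `I` of `n`:
permutations preserving each block of the composition. -/
def youngSubgroup {n : ℕ} (c : Composition n) : Subgroup (Equiv.Perm (Fin n)) where
  carrier := {w | ∀ i, c.index (w i) = c.index i}
  one_mem' := fun _ => rfl
  mul_mem' := by
    intro a b ha hb i
    have hb' := hb i
    have ha' := ha (b i)
    simpa [Equiv.Perm.mul_apply, hb'] using ha'
  inv_mem' := by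
    intro a ha i
    have := ha (a⁻¹ i)
    simpa using this.symm

/-- `w` is the minimal-length representative of its coset `w·S_I`. -/
def IsMinCosetRep {n : ℕ} (c : Composition n) (w : Equiv.Perm (Fin n)) : Prop :=
  ∀ u ∈ youngSubgroup c, len w ≤ len (w * u)

/-- `w` is of maximal length in its coset `w·S_I`. -/
def IsMaxCosetRep {n : ℕ} (c : Composition n) (w : Equiv.Perm (Fin n)) : Prop :=
  ∀ u ∈ youngSubgroup c, len (w * u) ≤ len w

/-- The set of minimal-length representatives of the cosets `S_n/S_I`. -/
def minCosetReps {n : ℕ} (c : Composition n) : Finset (Equiv.Perm (Fin n)) :=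
  @Finset.filter _ (IsMinCosetRep c) (Classical.decPred _) Finset.univ

/-- The word `[a+m-2, …, a+1, a]` (so that the corresponding product of adjacent
transpositions is the block cyclic permutation `ζ_m` shifted by `a`). -/
def zetaWordBlock (a m : ℕ) : List ℕ := (List.range (m - 1)).reverse.map (a + ·)

/-- The reduced word of the permutation `w_J` (whose Hecke element is `ζ_J`),
for a composition `J` of `n`. -/
def zetaWord {n : ℕ} (c : Composition n) : List ℕ :=
  (List.ofFn fun k : Fin c.length =>
    zetaWordBlock (c.sizeUpTo k) (c.blocksFun k)).flatten

/-- The permutation `w_J`, a minimal-length representative of the conjugacy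
class corresponding to the composition `J`; `ζ_J = T_{w_J}`. -/
def zetaPerm {n : ℕ} (c : Composition n) : Equiv.Perm (Fin n) :=
  ((zetaWord c).map (adj n)).prod

/-- The composition of `n` obtained by sorting the parts of a partition of `n`
in decreasing order. -/
def partComp {n : ℕ} (μ : n.Partition) : Composition n where
  blocks := μ.parts.sort (· ≥ ·)
  blocks_pos := by
    intro i hi
    exact μ.parts_pos (by rwa [Multiset.mem_sort] at hi)
  blocks_sum := by
    have h : ((μ.parts.sort (· ≥ ·) : List ℕ) : Multiset ℕ) = μ.parts :=
      Multiset.sort_eq _ _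
    calc (μ.parts.sort (· ≥ ·)).sum
        = ((μ.parts.sort (· ≥ ·) : List ℕ) : Multiset ℕ).sum := by
          rw [Multiset.sum_coe]
      _ = μ.parts.sum := by rw [h]
      _ = n := μ.parts_sum

/-- `m` is a partial sum `j_1 + ⋯ + j_k` of the composition `J`. -/
def IsPartialSum {n : ℕ} (c : Composition n) (m : ℕ) : Prop :=
  ∃ k ≤ c.length, c.sizeUpTo k = m

/-- `w` has a recoil at `a` (0-based; i.e. at `i = a+1` in the 1-based notation of
the paper): the value `a+1` occurs to the left of the value `a` in the one-line
word of `w`. -/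
def Recoil {n : ℕ} (w : Equiv.Perm (Fin n)) (a : ℕ) : Prop :=
  ∀ h : a + 1 < n, w⁻¹ ⟨a + 1, h⟩ < w⁻¹ ⟨a, by omega⟩

namespace HeckeAlgebra

variable {n : ℕ} {R : Type} [CommRing R] {q : Rˣ} {H : Type} [Ring H] [Algebra R H]
variable (𝒜 : HeckeAlgebra n R q H)

/-- The scalar product on `H_n` for which the basis `{T_w}` is orthonormal. -/
def scalar (x y : H) : R :=
  ∑ w : Equiv.Perm (Fin n), 𝒜.basis.repr x w * 𝒜.basis.repr y w

/-- The normalization map `N_I : H(S_I) → H_n`,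
`h ↦ Σ_w T_w h T_{w⁻¹}` (sum over the minimal-length coset representatives of
`S_n/S_I`). -/
def norm (c : Composition n) (h : H) : H :=
  ∑ w ∈ minCosetReps c, 𝒜.T w * h * 𝒜.T w⁻¹

/-- The product `T_{a_1} T_{a_2} ⋯` in the Hecke algebra associated with a word
(list of 0-based indices of the generators). -/
def wordT (l : List ℕ) : H := (l.map fun a => 𝒜.T (adj n a)).prod

/-- The Hecke element `ζ_J = T_{w_J}` of a composition `J`. -/
def zeta (c : Composition n) : H := 𝒜.T (zetaPerm c)

end HeckeAlgebra

/-- The permutation with reduced word `s_{a+j-1} ⋯ s_{a+1}` (1-based), i.e. the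
permutation underlying the shifted Jucys–Murphy "square root"
`T_{a+j-2} ⋯ T_a` (0-based indices). -/
def jmPerm (n a j : ℕ) : Equiv.Perm (Fin n) :=
  ((zetaWordBlock a j).map (adj n)).prod

/-- The permutation `σ(u)` associated to a 0-1 vector `u` (indexed `1,…,r`):
the product `(1)^{u_1}·(s_1)^{u_2}·(s_2s_1)^{u_3}⋯`. -/
def sigmaOf (n r : ℕ) (u : ℕ → ℕ) : Equiv.Perm (Fin n) :=
  ((List.range r).map fun i => jmPerm n 0 (i + 1) ^ u (i + 1)).prod

/-- The permutation `σ(uu)` associated to a sequence of 0-1 vectors compatible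
with the composition `c` (the sequence being recorded as a single function `uu`
on 0-based positions). -/
def sigmaUU {n : ℕ} (c : Composition n) (uu : ℕ → ℕ) : Equiv.Perm (Fin n) :=
  (List.ofFn fun k : Fin c.length =>
    ((List.range (c.blocksFun k)).map fun j =>
      jmPerm n (c.sizeUpTo k) (j + 1) ^ uu (c.sizeUpTo k + j)).prod).prod

namespace HeckeAlgebra

variable {n : ℕ} {R : Type} [CommRing R] {q : Rˣ} {H : Type} [Ring H] [Algebra R H]
variable (𝒜 : HeckeAlgebra n R q H)

/-- The shifted Jucys–Murphy element `ξ_j` of the block starting at `a`: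
`T_{a+j-2} ⋯ T_a · T_a ⋯ T_{a+j-2}` (0-based indices); for `a = 0` this is the
Jucys–Murphy element `ξ_j = T_{j−1}⋯T_1·T_1⋯T_{j−1}`. -/
def xiShift (a j : ℕ) : H :=
  𝒜.wordT (zetaWordBlock a j) * 𝒜.wordT (zetaWordBlock a j).reverse

/-- The standard monomial `ξ^u = ξ_1^{u_1} ⋯ ξ_r^{u_r}` in Jucys–Murphy elements. -/
def xiPow (r : ℕ) (u : ℕ → ℕ) : H :=
  ((List.range r).map fun i => 𝒜.xiShift 0 (i + 1) ^ u (i + 1)).prod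

/-- The square root `√(ξ^u) = (1)^{u_1}·(T_1)^{u_2}·(T_2T_1)^{u_3}⋯`. -/
def xiSqrt (r : ℕ) (u : ℕ → ℕ) : H :=
  ((List.range r).map fun i => 𝒜.wordT (zetaWordBlock 0 (i + 1)) ^ u (i + 1)).prod

/-- The direct product `ξ^{uu}` of standard monomials in the Jucys–Murphy
elements of each block of `H(S_I)`. -/
def xiUU (c : Composition n) (uu : ℕ → ℕ) : H :=
  (List.ofFn fun k : Fin c.length =>
    ((List.range (c.blocksFun k)).map fun j =>
      𝒜.xiShift (c.sizeUpTo k) (j + 1) ^ uu (c.sizeUpTo k + j)).prod).prod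

end HeckeAlgebra

/-!
The square root `√(ξ^u)` is the concatenation of the words `s_{j-1} ⋯ s_1` of the cycles `c_j`
with `u_j = 1`. The product `w` of the earlier factors fixes every point `≥ j`, so `w c_j` is
reached from `w` through `j - 1` ascents: the concatenated word is reduced and
`√(ξ^u) = T_{σ(u)}`.

For `ξ^u`, add the factors `ξ_j = T_{c_j} T_{c_j⁻¹}` one at a time. Since
`c_j⁻¹ s_i c_j = s_{i+1}` for `i < j - 1`, `ξ_j` commutes with these `T_{s_i}`, hence (by descent
induction on the length) with `T_{w⁻¹}`; as lengths add,
`T_w T_{w⁻¹} ξ_j = T_w T_{c_j} T_{c_j⁻¹} T_{w⁻¹} = T_{w c_j} T_{(w c_j)⁻¹}`. For a composition the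
same telescoping runs over the blocks: their permutations have disjoint supports, so lengths add,
and the generators of earlier blocks commute with the Jucys–Murphy elements of later ones.
-/

section Length

variable {n : ℕ}

lemma len_eq_card_inversions (w : Equiv.Perm (Fin n)) :
    len w = (univ.filter fun p : Fin n × Fin n => p.1 < p.2 ∧ w p.2 < w p.1).card := rfl

lemma len_one : len (1 : Equiv.Perm (Fin n)) = 0 := by
  rw [len, card_eq_zero, filter_eq_empty_iff]
  exact fun _ _ h => lt_asymm h.1 h.2

lemma len_inv (w : Equiv.Perm (Fin n)) : len w⁻¹ = len w :=
  card_equiv ((Equiv.prodComm _ _).trans (w⁻¹.prodCongr w⁻¹)) fun p => by simp [and_comm]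

lemma adj_val {a : ℕ} (h : a + 1 < n) (x : Fin n) :
    (adj n a x : ℕ) = if (x : ℕ) = a then a + 1 else if (x : ℕ) = a + 1 then a else x := by
  rw [adj, dif_pos h]
  obtain ⟨x, hx⟩ := x
  by_cases h1 : x = a
  · subst h1; simp
  by_cases h2 : x = a + 1
  · subst h2; simp
  rw [Equiv.swap_apply_of_ne_of_ne (by simpa using h1) (by simpa using h2), if_neg h1, if_neg h2]

lemma adj_mul_self (a : ℕ) : adj n a * adj n a = 1 := by
  unfold adj
  split_ifs
  exacts [Equiv.swap_mul_self _ _, one_mul 1]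

lemma adj_inv (a : ℕ) : (adj n a)⁻¹ = adj n a :=
  inv_eq_of_mul_eq_one_left (adj_mul_self a)

lemma len_mul_adj_of_lt {a : ℕ} (ha : a + 1 < n) {w : Equiv.Perm (Fin n)}
    (hw : w ⟨a, by omega⟩ < w ⟨a + 1, ha⟩) : len (w * adj n a) = len w + 1 := by
  have ha' : a < n := by omega
  have hss : ∀ x, adj n a (adj n a x) = x := fun x => by
    rw [← Equiv.Perm.mul_apply, adj_mul_self, Equiv.Perm.one_apply]
  have hs : ∀ x y : Fin n, adj n a x < adj n a y ↔
      (x < y ∧ ¬((x : ℕ) = a ∧ (y : ℕ) = a + 1)) ∨ ((x : ℕ) = a + 1 ∧ (y : ℕ) = a) := by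
    intro x y
    rw [Fin.lt_def, Fin.lt_def, adj_val ha, adj_val ha]
    split_ifs <;> omega
  -- After reindexing by `adj n a` in both coordinates, the inversions of `w * adj n a` are
  -- those of `w` together with `(a + 1, a)`.
  have hcard : len (w * adj n a) = (univ.filter fun p : Fin n × Fin n =>
      adj n a p.1 < adj n a p.2 ∧ w p.2 < w p.1).card :=
    card_equiv ((adj n a).prodCongr (adj n a)) fun p => by
      rw [mem_filter, mem_filter]
      simp [hss]
  rw [hcard, len_eq_card_inversions,
    ← card_insert_of_notMem (a := (⟨a + 1, ha⟩, ⟨a, ha'⟩)) (by simp)]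
  congr 1
  ext ⟨x, y⟩
  simp only [mem_filter, mem_univ, true_and, mem_insert, Prod.mk.injEq, hs, Fin.ext_iff]
  constructor
  · rintro ⟨(⟨hxy, -⟩ | hba), hwxy⟩
    exacts [Or.inr ⟨hxy, hwxy⟩, Or.inl hba]
  · rintro (⟨hx, hy⟩ | ⟨hxy, hwxy⟩)
    · obtain rfl : x = ⟨a + 1, ha⟩ := Fin.ext hx
      obtain rfl : y = ⟨a, ha'⟩ := Fin.ext hy
      exact ⟨Or.inr ⟨hx, hy⟩, hw⟩
    · refine ⟨Or.inl ⟨hxy, ?_⟩, hwxy⟩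
      rintro ⟨hx, hy⟩
      obtain rfl : x = ⟨a, ha'⟩ := Fin.ext hx
      obtain rfl : y = ⟨a + 1, ha⟩ := Fin.ext hy
      exact lt_asymm hw hwxy

lemma len_mul_adj_of_gt {a : ℕ} (ha : a + 1 < n) {w : Equiv.Perm (Fin n)}
    (hw : w ⟨a + 1, ha⟩ < w ⟨a, by omega⟩) : len (w * adj n a) + 1 = len w := by
  have h := len_mul_adj_of_lt ha (w := w * adj n a) (by
    simp only [Equiv.Perm.mul_apply]
    convert hw using 2 <;> ext <;> simp [adj_val ha])
  rwa [mul_assoc, adj_mul_self, mul_one, eq_comm] at h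

lemma len_adj {a : ℕ} (ha : a + 1 < n) : len (adj n a) = 1 := by
  simpa [len_one] using len_mul_adj_of_lt ha (w := 1) (by simp)

lemma len_mul_adj_le (w : Equiv.Perm (Fin n)) (a : ℕ) : len (w * adj n a) ≤ len w + 1 := by
  by_cases ha : a + 1 < n
  · rcases lt_or_gt_of_ne (w.injective.ne (Fin.ne_of_val_ne (Nat.succ_ne_self a).symm) :
      w ⟨a, by omega⟩ ≠ w ⟨a + 1, ha⟩) with hlt | hgt
    · exact (len_mul_adj_of_lt ha hlt).le
    · have := len_mul_adj_of_gt ha hgt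
      omega
  · simp [adj, ha]

lemma len_mul_prod_adj_le (w : Equiv.Perm (Fin n)) (l : List ℕ) :
    len (w * (l.map (adj n)).prod) ≤ len w + l.length := by
  induction l generalizing w with
  | nil => simp
  | cons a l ih =>
    have := len_mul_adj_le w a
    have := ih (w * adj n a)
    simp only [List.map_cons, List.prod_cons, List.length_cons, ← mul_assoc]
    omega

lemma exists_adj_lt_of_ne_one {w : Equiv.Perm (Fin n)} (hw : w ≠ 1) :
    ∃ i, ∃ h : i + 1 < n, w ⟨i + 1, h⟩ < w ⟨i, by omega⟩ := by
  by_contra! hasc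
  obtain _ | m := n
  · exact hw (Subsingleton.elim _ _)
  have hmono : StrictMono w := Fin.strictMono_iff_lt_succ.2 fun i =>
    (hasc i i.succ.isLt).lt_of_ne (w.injective.ne Fin.castSucc_lt_succ.ne)
  refine hw (Equiv.ext fun x => ?_)
  simpa using congrArg (· x)
    (Subsingleton.elim (StrictMono.orderIsoOfSurjective w hmono w.surjective) (OrderIso.refl _))

end Length

/-- The parabolic subgroup `S_{[a,b)}`. -/
def permIco (n a b : ℕ) : Subgroup (Equiv.Perm (Fin n)) :=
  fixingSubgroup (Equiv.Perm (Fin n)) {x : Fin n | (x : ℕ) < a ∨ b ≤ x}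

section PermIco
variable {n a b : ℕ} {w v : Equiv.Perm (Fin n)}

lemma mem_permIco : w ∈ permIco n a b ↔ ∀ x : Fin n, ((x : ℕ) < a ∨ b ≤ x) → w x = x :=
  mem_fixingSubgroup_iff _

lemma permIco_mono {a' b' : ℕ} (ha : a' ≤ a) (hb : b ≤ b') : permIco n a b ≤ permIco n a' b' :=
  fun _ hw => mem_permIco.2 fun x hx => mem_permIco.1 hw x (by omega)

lemma adj_mem_permIco {i : ℕ} (ha : a ≤ i) (hb : i + 1 < b) : adj n i ∈ permIco n a b := by
  refine mem_permIco.2 fun x hx => ?_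
  unfold adj
  split_ifs
  · exact Equiv.swap_apply_of_ne_of_ne (Fin.ne_of_val_ne (by dsimp only; omega))
      (Fin.ne_of_val_ne (by dsimp only; omega))
  · rfl

lemma le_apply_of_mem_permIco (hw : w ∈ permIco n a b) {x : Fin n} (hx : a ≤ x) : a ≤ w x := by
  by_contra! h
  have hfix := mem_permIco.1 hw (w x) (Or.inl h)
  rw [w.injective hfix] at h
  omega

lemma apply_lt_of_mem_permIco (hw : w ∈ permIco n a b) {x : Fin n} (hx : (x : ℕ) < b) :
    (w x : ℕ) < b := by
  by_contra! h
  have hfix := mem_permIco.1 hw (w x) (Or.inr h)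
  rw [w.injective hfix] at h
  omega

lemma exists_adj_lt_of_mem_permIco (hw : w ∈ permIco n a b) (h1 : w ≠ 1) :
    ∃ i, ∃ h : i + 1 < n, a ≤ i ∧ i + 1 < b ∧ w ⟨i + 1, h⟩ < w ⟨i, by omega⟩ := by
  obtain ⟨i, h, hlt⟩ := exists_adj_lt_of_ne_one h1
  have hfix : ∀ x : Fin n, ((x : ℕ) < a ∨ b ≤ x) → (w x : ℕ) = x :=
    fun x hx => congrArg Fin.val (mem_permIco.1 hw x hx)
  have h₀ := hfix ⟨i, by omega⟩
  have h₁ := hfix ⟨i + 1, h⟩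
  have h₀' := apply_lt_of_mem_permIco hw (x := ⟨i, by omega⟩)
  have h₁' := le_apply_of_mem_permIco hw (x := ⟨i + 1, h⟩)
  dsimp only at h₀ h₁ h₀' h₁'
  rw [Fin.lt_def] at hlt
  refine ⟨i, h, ?_, ?_, hlt⟩ <;> by_contra! hi
  · rcases lt_or_ge (i + 1) a with hi' | hi'
    · omega
    · have := h₁' hi'
      omega
  · rcases lt_or_ge i b with hi' | hi'
    · have := h₀' hi'
      omega
    · omega

lemma len_mul_of_mem_permIco {A : ℕ} (hw : w ∈ permIco n 0 A) (hv : v ∈ permIco n A n) :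
    len (w * v) = len w + len v := by
  have key : ∀ x : Fin n,
      ((w * v) x = w x ∧ v x = x ∧ (w x : ℕ) < A ∧ (x : ℕ) < A) ∨
      ((w * v) x = v x ∧ w x = x ∧ A ≤ (v x : ℕ) ∧ A ≤ (x : ℕ)) := by
    intro x
    rcases lt_or_ge (x : ℕ) A with hx | hx
    · have hvx := mem_permIco.1 hv x (Or.inl hx)
      exact Or.inl ⟨by rw [Equiv.Perm.mul_apply, hvx], hvx, apply_lt_of_mem_permIco hw hx, hx⟩
    · have hvx := le_apply_of_mem_permIco hv hx
      exact Or.inr ⟨mem_permIco.1 hw _ (Or.inr hvx), mem_permIco.1 hw x (Or.inr hx), hvx, hx⟩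
  simp only [len_eq_card_inversions]
  rw [← card_union_of_disjoint]
  · congr 1
    ext ⟨x, y⟩
    simp only [mem_filter, mem_univ, true_and, mem_union, Fin.lt_def]
    rcases key x with ⟨hx1, hx2, hx3, hx4⟩ | ⟨hx1, hx2, hx3, hx4⟩ <;>
      rcases key y with ⟨hy1, hy2, hy3, hy4⟩ | ⟨hy1, hy2, hy3, hy4⟩ <;>
      simp only [hx1, hy1, hx2, hy2] <;> omega
  · refine disjoint_left.2 fun ⟨x, y⟩ hw' hv' => ?_
    simp only [mem_filter, mem_univ, true_and, Fin.lt_def] at hw' hv'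
    rcases key x with ⟨-, hx2, hx3, hx4⟩ | ⟨-, hx2, hx3, hx4⟩ <;>
      rcases key y with ⟨-, hy2, hy3, hy4⟩ | ⟨-, hy2, hy3, hy4⟩ <;>
      simp only [hx2, hy2] at hw' hv' <;> omega

lemma permIco_le_youngSubgroup (c : Composition n) (k : Fin c.length) :
    permIco n (c.sizeUpTo k) (c.sizeUpTo (k + 1)) ≤ youngSubgroup c := by
  intro w hw x
  have index_eq : ∀ y : Fin n, c.sizeUpTo k ≤ y → (y : ℕ) < c.sizeUpTo (k + 1) → c.index y = k :=
    fun y h1 h2 => (c.mem_range_embedding_iff'.1 (c.mem_range_embedding_iff.2 ⟨h1, h2⟩)).symm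
  by_cases hx : c.sizeUpTo k ≤ x ∧ (x : ℕ) < c.sizeUpTo (k + 1)
  · rw [index_eq x hx.1 hx.2,
      index_eq _ (le_apply_of_mem_permIco hw hx.1) (apply_lt_of_mem_permIco hw hx.2)]
  · rw [mem_permIco.1 hw x (by omega)]

end PermIco

section JucysMurphy
variable {n : ℕ}

lemma zetaWordBlock_succ_succ (a m : ℕ) :
    zetaWordBlock a (m + 2) = (a + m) :: zetaWordBlock a (m + 1) := by
  simp [zetaWordBlock, List.range_succ]

lemma zetaWordBlock_succ_succ' (a m : ℕ) :
    zetaWordBlock a (m + 2) = zetaWordBlock (a + 1) (m + 1) ++ [a] := by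
  induction m generalizing a with
  | zero => simp [zetaWordBlock]
  | succ m ih =>
    rw [zetaWordBlock_succ_succ, ih, zetaWordBlock_succ_succ, add_right_comm, add_assoc]
    rfl

lemma length_zetaWordBlock (a m : ℕ) : (zetaWordBlock a m).length = m - 1 := by
  simp [zetaWordBlock]

lemma jmPerm_succ_succ' (a m : ℕ) :
    jmPerm n a (m + 2) = jmPerm n (a + 1) (m + 1) * adj n a := by
  simp [jmPerm, zetaWordBlock_succ_succ']

lemma jmPerm_val {a m : ℕ} (h : a + m + 1 ≤ n) (x : Fin n) :
    (jmPerm n a (m + 1) x : ℕ) =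
      if (x : ℕ) = a then a + m else if a < x ∧ (x : ℕ) ≤ a + m then x - 1 else x := by
  induction m with
  | zero =>
    rw [show jmPerm n a (0 + 1) = 1 from rfl, Equiv.Perm.one_apply]
    split_ifs <;> omega
  | succ m ih =>
    rw [jmPerm, zetaWordBlock_succ_succ, List.map_cons, List.prod_cons, Equiv.Perm.mul_apply,
      adj_val (by omega), ← jmPerm, ih (by omega)]
    split_ifs <;> omega

lemma jmPerm_mem_permIco (a m : ℕ) : jmPerm n a (m + 1) ∈ permIco n a (a + m + 1) :=
  Subgroup.list_prod_mem _ fun _ hs => by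
    obtain ⟨_, hi, rfl⟩ := List.mem_map.1 hs
    obtain ⟨j, hj, rfl⟩ := List.mem_map.1 hi
    rw [List.mem_reverse, List.mem_range, Nat.add_sub_cancel] at hj
    exact adj_mem_permIco (by omega) (by omega)

lemma len_mul_jmPerm {a m : ℕ} (h : a + m + 1 ≤ n) {w : Equiv.Perm (Fin n)}
    (hw : w ∈ permIco n 0 (a + m)) : len (w * jmPerm n a (m + 1)) = len w + m := by
  induction m generalizing a with
  | zero => simp [jmPerm, zetaWordBlock]
  | succ m ih =>
    have hv := ih (a := a + 1) (by omega) (by rwa [add_right_comm])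
    have hc := jmPerm_mem_permIco (n := n) (a + 1) m
    have hca : jmPerm n (a + 1) (m + 1) ⟨a, by omega⟩ = ⟨a, by omega⟩ :=
      mem_permIco.1 hc _ (Or.inl (Nat.lt_succ_self a))
    have hca' : jmPerm n (a + 1) (m + 1) ⟨a + 1, by omega⟩ = ⟨a + 1 + m, by omega⟩ :=
      Fin.ext (by simp [jmPerm_val (show a + 1 + m + 1 ≤ n by omega)])
    have hwa : (w ⟨a, by omega⟩ : ℕ) < a + (m + 1) := apply_lt_of_mem_permIco hw (by simp)
    have hwa' : w ⟨a + 1 + m, by omega⟩ = ⟨a + 1 + m, by omega⟩ :=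
      mem_permIco.1 hw _ (Or.inr (by simp only; omega))
    have hlt : (w * jmPerm n (a + 1) (m + 1)) ⟨a, by omega⟩ <
        (w * jmPerm n (a + 1) (m + 1)) ⟨a + 1, by omega⟩ := by
      rw [Equiv.Perm.mul_apply, Equiv.Perm.mul_apply, hca, hca', hwa', Fin.lt_def]
      simp only
      omega
    rw [jmPerm_succ_succ', ← mul_assoc, len_mul_adj_of_lt (by omega) hlt, hv]
    ring

lemma len_jmPerm {a m : ℕ} (h : a + m + 1 ≤ n) : len (jmPerm n a (m + 1)) = m := by
  simpa [len_one] using len_mul_jmPerm h (w := 1) (one_mem _)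

lemma adj_mul_jmPerm_of_lt {a m i : ℕ} (h : a + m + 1 ≤ n) (hi : i + 1 < a) :
    adj n i * jmPerm n a (m + 1) = jmPerm n a (m + 1) * adj n i := by
  ext x
  simp only [Equiv.Perm.mul_apply, adj_val (show i + 1 < n by omega), jmPerm_val h]
  split_ifs <;> omega

lemma adj_mul_jmPerm_of_le {a m i : ℕ} (h : a + m + 1 ≤ n) (hi : a ≤ i) (hi' : i + 1 < a + m) :
    adj n i * jmPerm n a (m + 1) = jmPerm n a (m + 1) * adj n (i + 1) := by
  ext x
  simp only [Equiv.Perm.mul_apply, adj_val (show i + 1 < n by omega),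
    adj_val (show i + 1 + 1 < n by omega), jmPerm_val h]
  split_ifs <;> omega

end JucysMurphy

lemma len_prod_map_range {n : ℕ} {F : ℕ → Equiv.Perm (Fin n)} {K : ℕ}
    (h : ∀ k < K, len (((List.range k).map F).prod * F k) =
      len ((List.range k).map F).prod + len (F k)) :
    len ((List.range K).map F).prod = ∑ k ∈ range K, len (F k) := by
  induction K with
  | zero => simp [len_one]
  | succ K ih =>
    rw [List.range_succ, List.map_append, List.prod_append, List.map_singleton,
      List.prod_singleton, h K K.lt_succ_self, ih fun k hk => h k (by omega), sum_range_succ]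

/-- The permutation `σ(e)` of the monomial `∏_{j < M} ξ_{j+1}^{e j}` in the Jucys–Murphy elements
of the block `[a, a + M)`. -/
def jmBlockPerm (n a M : ℕ) (e : ℕ → ℕ) : Equiv.Perm (Fin n) :=
  ((List.range M).map fun j => jmPerm n a (j + 1) ^ e j).prod

lemma jmBlockPerm_mem_permIco (n a M : ℕ) (e : ℕ → ℕ) :
    jmBlockPerm n a M e ∈ permIco n a (a + M) :=
  Subgroup.list_prod_mem _ fun _ hs => by
    obtain ⟨j, hj, rfl⟩ := List.mem_map.1 hs
    rw [List.mem_range] at hj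
    exact pow_mem (permIco_mono le_rfl (by omega) (jmPerm_mem_permIco a j)) _

lemma len_jmBlockPerm_mul {n a j : ℕ} {e : ℕ → ℕ} (he : e j ≤ 1) (h : a + j + 1 ≤ n) :
    len (jmBlockPerm n a j e * jmPerm n a (j + 1) ^ e j) =
      len (jmBlockPerm n a j e) + len (jmPerm n a (j + 1) ^ e j) := by
  interval_cases e j
  · simp [len_one]
  · rw [pow_one, len_jmPerm h,
      len_mul_jmPerm h (permIco_mono (Nat.zero_le a) le_rfl (jmBlockPerm_mem_permIco n a j e))]

lemma len_jmBlockPerm {n a M : ℕ} {e : ℕ → ℕ} (he : ∀ j, e j ≤ 1) (h : a + M ≤ n) :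
    len (jmBlockPerm n a M e) = ∑ j ∈ range M, e j * j := by
  rw [jmBlockPerm, len_prod_map_range fun j hj => len_jmBlockPerm_mul (he j) (by omega)]
  refine sum_congr rfl fun j hj => ?_
  rcases Nat.le_one_iff_eq_zero_or_eq_one.1 (he j) with h0 | h1
  · simp [h0, len_one]
  · rw [h1, pow_one, one_mul, len_jmPerm (by rw [mem_range] at hj; omega)]

lemma List.ofFn_eq_map_range {α : Type*} {L : ℕ} {f : Fin L → α} {g : ℕ → α}
    (h : ∀ i (hi : i < L), f ⟨i, hi⟩ = g i) : List.ofFn f = (List.range L).map g :=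
  List.ext_getElem (by simp) fun i _ _ => by simp [h]

/-- The factor of `σ(uu)` on the `k`-th block of `c`. -/
def sigmaBlock {n : ℕ} (c : Composition n) (uu : ℕ → ℕ) (k : ℕ) : Equiv.Perm (Fin n) :=
  jmBlockPerm n (c.sizeUpTo k) (c.sizeUpTo (k + 1) - c.sizeUpTo k) fun j => uu (c.sizeUpTo k + j)

section Composition
variable {n : ℕ} (c : Composition n) (uu : ℕ → ℕ)

lemma blocksFun_eq_sizeUpTo_sub {k : ℕ} (hk : k < c.length) :
    c.blocksFun ⟨k, hk⟩ = c.sizeUpTo (k + 1) - c.sizeUpTo k := by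
  have := c.sizeUpTo_succ' ⟨k, hk⟩
  dsimp only at this
  omega

lemma sigmaBlock_mem_permIco (k : ℕ) :
    sigmaBlock c uu k ∈ permIco n (c.sizeUpTo k) (c.sizeUpTo (k + 1)) := by
  rw [← Nat.add_sub_cancel' (c.monotone_sizeUpTo k.le_succ)]
  exact jmBlockPerm_mem_permIco n (c.sizeUpTo k) (c.sizeUpTo (k + 1) - c.sizeUpTo k)
      fun j => uu (c.sizeUpTo k + j)

lemma prod_sigmaBlock_mem_permIco (k : ℕ) :
    ((List.range k).map (sigmaBlock c uu)).prod ∈ permIco n 0 (c.sizeUpTo k) :=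
  Subgroup.list_prod_mem _ fun _ hs => by
    obtain ⟨k', hk', rfl⟩ := List.mem_map.1 hs
    exact permIco_mono (Nat.zero_le _) (c.monotone_sizeUpTo (List.mem_range.1 hk'))
      (sigmaBlock_mem_permIco c uu k')

lemma sigmaUU_eq_prod_sigmaBlock :
    sigmaUU c uu = ((List.range c.length).map (sigmaBlock c uu)).prod :=
  congrArg List.prod <| List.ofFn_eq_map_range fun k hk => by
    rw [sigmaBlock, ← blocksFun_eq_sizeUpTo_sub c hk]
    rfl

lemma sigmaUU_mem_youngSubgroup : sigmaUU c uu ∈ youngSubgroup c :=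
  Subgroup.list_prod_mem _ fun _ hs => by
    obtain ⟨k, rfl⟩ := List.mem_ofFn.1 hs
    have hmem := jmBlockPerm_mem_permIco n (c.sizeUpTo k) (c.blocksFun k)
      (fun j => uu (c.sizeUpTo k + j))
    rw [← c.sizeUpTo_succ'] at hmem
    exact permIco_le_youngSubgroup c k hmem

end Composition

namespace HeckeAlgebra

variable {n : ℕ} {R : Type} [CommRing R] {q : Rˣ} {H : Type} [Ring H] [Algebra R H]
variable (𝒜 : HeckeAlgebra n R q H)

lemma wordT_cons (a : ℕ) (l : List ℕ) : 𝒜.wordT (a :: l) = 𝒜.T (adj n a) * 𝒜.wordT l := by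
  simp [wordT]

lemma T_mul_wordT {w : Equiv.Perm (Fin n)} {l : List ℕ}
    (h : len (w * (l.map (adj n)).prod) = len w + l.length) :
    𝒜.T w * 𝒜.wordT l = 𝒜.T (w * (l.map (adj n)).prod) := by
  induction l generalizing w with
  | nil => simp [wordT]
  | cons a l ih =>
    rw [List.length_cons, List.map_cons, List.prod_cons, ← mul_assoc] at h
    rw [List.map_cons, List.prod_cons, ← mul_assoc]
    have h₁ := len_mul_adj_le w a
    have h₂ := len_mul_prod_adj_le (w * adj n a) l
    have hs : len (adj n a) = 1 := by
      by_cases ha : a + 1 < n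
      · exact len_adj ha
      · simp only [adj, ha, dite_false, mul_one] at h h₁ h₂
        omega
    rw [wordT_cons, ← mul_assoc, 𝒜.T_mul _ _ (by omega), ih (by omega)]

lemma wordT_eq_T {l : List ℕ} (h : len (l.map (adj n)).prod = l.length) :
    𝒜.wordT l = 𝒜.T (l.map (adj n)).prod := by
  simpa [𝒜.T_one] using 𝒜.T_mul_wordT (w := 1) (by simpa [len_one] using h)

lemma wordT_zetaWordBlock {a m : ℕ} (h : a + m + 1 ≤ n) :
    𝒜.wordT (zetaWordBlock a (m + 1)) = 𝒜.T (jmPerm n a (m + 1)) :=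
  𝒜.wordT_eq_T (by rw [← jmPerm, len_jmPerm h, length_zetaWordBlock, Nat.add_sub_cancel])

lemma wordT_reverse_zetaWordBlock {a m : ℕ} (h : a + m + 1 ≤ n) :
    𝒜.wordT (zetaWordBlock a (m + 1)).reverse = 𝒜.T (jmPerm n a (m + 1))⁻¹ := by
  have hinv : ((zetaWordBlock a (m + 1)).reverse.map (adj n)).prod = (jmPerm n a (m + 1))⁻¹ := by
    rw [jmPerm, List.prod_inv_reverse, List.map_map,
      show ((·⁻¹) ∘ adj n) = adj n from funext adj_inv, List.map_reverse]
  rw [𝒜.wordT_eq_T (by rw [hinv, len_inv, len_jmPerm h, List.length_reverse,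
    length_zetaWordBlock, Nat.add_sub_cancel]), hinv]

lemma xiShift_eq {a m : ℕ} (h : a + m + 1 ≤ n) :
    𝒜.xiShift a (m + 1) = 𝒜.T (jmPerm n a (m + 1)) * 𝒜.T (jmPerm n a (m + 1))⁻¹ := by
  rw [xiShift, 𝒜.wordT_zetaWordBlock h, 𝒜.wordT_reverse_zetaWordBlock h]

lemma commute_T_of_mem_permIco {a b : ℕ} {x : H}
    (hx : ∀ i, a ≤ i → i + 1 < b → Commute (𝒜.T (adj n i)) x)
    {w : Equiv.Perm (Fin n)} (hw : w ∈ permIco n a b) : Commute (𝒜.T w) x := by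
  induction hl : len w using Nat.strong_induction_on generalizing w with
  | _ L ih =>
    by_cases h1 : w = 1
    · rw [h1, 𝒜.T_one]
      exact Commute.one_left x
    obtain ⟨i, h, hai, hib, hlt⟩ := exists_adj_lt_of_mem_permIco hw h1
    have hlen := len_mul_adj_of_gt h hlt
    have hw' : w * adj n i * adj n i = w := by rw [mul_assoc, adj_mul_self, mul_one]
    have hT : 𝒜.T w = 𝒜.T (w * adj n i) * 𝒜.T (adj n i) := by
      rw [𝒜.T_mul _ _ (by rw [hw', len_adj h]; omega), hw']
    rw [hT]
    exact (ih _ (by omega) (mul_mem hw (adj_mem_permIco hai hib)) rfl).mul_left (hx i hai hib)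

lemma T_adj_mul_T_of_adj_mul_eq {i j : ℕ} (hi : i + 1 < n) (hj : j + 1 < n)
    {c : Equiv.Perm (Fin n)} (hrel : adj n i * c = c * adj n j)
    (hlen : len (c * adj n j) = len c + 1) :
    𝒜.T (adj n i) * 𝒜.T c = 𝒜.T c * 𝒜.T (adj n j) := by
  rw [𝒜.T_mul _ _ (by rw [hrel, hlen, len_adj hi, add_comm]),
    𝒜.T_mul _ _ (by rw [hlen, len_adj hj]), hrel]

-- The conjugation `c⁻¹ s_i c = s_j` moves `T_{s_i}` through `T_c` and back through `T_{c⁻¹}`.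
lemma commute_T_adj_T_mul_T_inv {i j : ℕ} (hi : i + 1 < n) (hj : j + 1 < n)
    {c : Equiv.Perm (Fin n)} (hrel : adj n i * c = c * adj n j)
    (hlen : len (c * adj n j) = len c + 1) :
    Commute (𝒜.T (adj n i)) (𝒜.T c * 𝒜.T c⁻¹) := by
  have hrel' : adj n j * c⁻¹ = c⁻¹ * adj n i := by
    rw [← adj_inv i, ← adj_inv j, ← mul_inv_rev, ← mul_inv_rev, hrel]
  have hlen' : len (c⁻¹ * adj n i) = len c⁻¹ + 1 := by
    rw [← adj_inv i, ← mul_inv_rev, len_inv, len_inv, hrel, hlen]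
  rw [Commute, SemiconjBy, ← mul_assoc, 𝒜.T_adj_mul_T_of_adj_mul_eq hi hj hrel hlen, mul_assoc,
    𝒜.T_adj_mul_T_of_adj_mul_eq hj hi hrel' hlen', mul_assoc]

lemma commute_T_adj_xiShift_of_lt {a m i : ℕ} (h : a + m + 1 ≤ n) (hi : i + 1 < a) :
    Commute (𝒜.T (adj n i)) (𝒜.xiShift a (m + 1)) := by
  have hc := jmPerm_mem_permIco (n := n) a m
  refine 𝒜.xiShift_eq h ▸ 𝒜.commute_T_adj_T_mul_T_inv (by omega) (by omega)
    (adj_mul_jmPerm_of_lt h hi) (len_mul_adj_of_lt (by omega) ?_)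
  rw [mem_permIco.1 hc ⟨i, by omega⟩ (Or.inl (Nat.lt_of_succ_lt hi)),
    mem_permIco.1 hc ⟨i + 1, by omega⟩ (Or.inl hi)]
  exact Fin.mk_lt_mk.2 i.lt_succ_self

lemma commute_T_adj_xiShift_of_le {a m i : ℕ} (h : a + m + 1 ≤ n) (hi : a ≤ i)
    (hi' : i + 1 < a + m) : Commute (𝒜.T (adj n i)) (𝒜.xiShift a (m + 1)) := by
  refine 𝒜.xiShift_eq h ▸ 𝒜.commute_T_adj_T_mul_T_inv (by omega) (by omega)
    (adj_mul_jmPerm_of_le h hi hi') (len_mul_adj_of_lt (by omega) ?_)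
  rw [Fin.lt_def, jmPerm_val h, jmPerm_val h]
  simp only
  split_ifs <;> omega

lemma prod_map_range_T {F : ℕ → Equiv.Perm (Fin n)} {K : ℕ}
    (h : ∀ k < K, len (((List.range k).map F).prod * F k) =
      len ((List.range k).map F).prod + len (F k)) :
    ((List.range K).map fun k => 𝒜.T (F k)).prod = 𝒜.T ((List.range K).map F).prod := by
  induction K with
  | zero => simp [𝒜.T_one]
  | succ K ih =>
    simp only [List.range_succ, List.map_append, List.prod_append, List.map_singleton,
      List.prod_singleton]
    rw [ih fun k hk => h k (by omega), 𝒜.T_mul _ _ (h K K.lt_succ_self)]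

lemma T_mul_T_inv_mul_T_mul_T_inv {w c : Equiv.Perm (Fin n)} (h : len (w * c) = len w + len c)
    (hc : Commute (𝒜.T w⁻¹) (𝒜.T c * 𝒜.T c⁻¹)) :
    𝒜.T w * 𝒜.T w⁻¹ * (𝒜.T c * 𝒜.T c⁻¹) = 𝒜.T (w * c) * 𝒜.T (w * c)⁻¹ := by
  have h' : len (c⁻¹ * w⁻¹) = len c⁻¹ + len w⁻¹ := by
    rw [← mul_inv_rev, len_inv, len_inv, len_inv, h, add_comm]
  rw [mul_assoc, hc.eq, ← mul_assoc, ← mul_assoc, 𝒜.T_mul _ _ h, mul_assoc,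
    𝒜.T_mul _ _ h', mul_inv_rev]

lemma prod_map_range_T_mul_T_inv {F : ℕ → Equiv.Perm (Fin n)} {K : ℕ}
    (h : ∀ k < K, len (((List.range k).map F).prod * F k) =
      len ((List.range k).map F).prod + len (F k))
    (hc : ∀ k < K, Commute (𝒜.T ((List.range k).map F).prod⁻¹) (𝒜.T (F k) * 𝒜.T (F k)⁻¹)) :
    ((List.range K).map fun k => 𝒜.T (F k) * 𝒜.T (F k)⁻¹).prod =
      𝒜.T ((List.range K).map F).prod * 𝒜.T ((List.range K).map F).prod⁻¹ := by
  induction K with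
  | zero => simp [𝒜.T_one]
  | succ K ih =>
    simp only [List.range_succ, List.map_append, List.prod_append, List.map_singleton,
      List.prod_singleton]
    rw [ih (fun k hk => h k (by omega)) (fun k hk => hc k (by omega)),
      𝒜.T_mul_T_inv_mul_T_mul_T_inv (h K K.lt_succ_self) (hc K K.lt_succ_self)]

lemma T_pow_of_le_one {w : Equiv.Perm (Fin n)} {e : ℕ} (he : e ≤ 1) : 𝒜.T (w ^ e) = 𝒜.T w ^ e := by
  interval_cases e <;> simp [𝒜.T_one]

lemma jmBlockSqrt_eq {a M : ℕ} {e : ℕ → ℕ} (he : ∀ j, e j ≤ 1) (h : a + M ≤ n) :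
    ((List.range M).map fun j => 𝒜.wordT (zetaWordBlock a (j + 1)) ^ e j).prod =
      𝒜.T (jmBlockPerm n a M e) := by
  rw [jmBlockPerm, ← 𝒜.prod_map_range_T fun j hj => len_jmBlockPerm_mul (he j) (by omega)]
  refine congrArg List.prod (List.map_congr_left fun j hj => ?_)
  rw [𝒜.T_pow_of_le_one (he j), 𝒜.wordT_zetaWordBlock (by rw [List.mem_range] at hj; omega)]

lemma jmBlockXi_eq {a M : ℕ} {e : ℕ → ℕ} (he : ∀ j, e j ≤ 1) (h : a + M ≤ n) :
    ((List.range M).map fun j => 𝒜.xiShift a (j + 1) ^ e j).prod =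
      𝒜.T (jmBlockPerm n a M e) * 𝒜.T (jmBlockPerm n a M e)⁻¹ := by
  have hterm : ∀ j < M, 𝒜.xiShift a (j + 1) ^ e j =
      𝒜.T (jmPerm n a (j + 1) ^ e j) * 𝒜.T (jmPerm n a (j + 1) ^ e j)⁻¹ := fun j hj => by
    rcases Nat.le_one_iff_eq_zero_or_eq_one.1 (he j) with h0 | h1
    · simp [h0, 𝒜.T_one]
    · rw [h1, pow_one, pow_one, 𝒜.xiShift_eq (by omega)]
  rw [jmBlockPerm, ← 𝒜.prod_map_range_T_mul_T_inv
    (fun j hj => len_jmBlockPerm_mul (he j) (by omega)) fun j hj => ?_]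
  · exact congrArg List.prod (List.map_congr_left fun j hj => hterm j (by simpa using hj))
  · rw [← hterm j hj]
    refine 𝒜.commute_T_of_mem_permIco (fun i hai hib => ?_)
      (inv_mem (jmBlockPerm_mem_permIco n a j e)) |>.pow_right _
    exact 𝒜.commute_T_adj_xiShift_of_le (by omega) hai hib

lemma xiUU_eq (c : Composition n) {uu : ℕ → ℕ} (huu : ∀ p, uu p ≤ 1) :
    𝒜.xiUU c uu = 𝒜.T (sigmaUU c uu) * 𝒜.T (sigmaUU c uu)⁻¹ := by
  have hsize : ∀ k, c.sizeUpTo k ≤ c.sizeUpTo (k + 1) ∧ c.sizeUpTo (k + 1) ≤ n := fun k =>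
    ⟨c.monotone_sizeUpTo k.le_succ, c.sizeUpTo_le _⟩
  have hblock : ∀ k, ((List.range (c.sizeUpTo (k + 1) - c.sizeUpTo k)).map fun j =>
      𝒜.xiShift (c.sizeUpTo k) (j + 1) ^ uu (c.sizeUpTo k + j)).prod =
      𝒜.T (sigmaBlock c uu k) * 𝒜.T (sigmaBlock c uu k)⁻¹ := fun k =>
    𝒜.jmBlockXi_eq (fun j => huu _) (by have := hsize k; omega)
  have hxi : 𝒜.xiUU c uu = ((List.range c.length).map fun k =>
      𝒜.T (sigmaBlock c uu k) * 𝒜.T (sigmaBlock c uu k)⁻¹).prod :=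
    congrArg List.prod <| List.ofFn_eq_map_range fun k hk => by
      rw [← hblock, ← blocksFun_eq_sizeUpTo_sub c hk]
  rw [hxi, sigmaUU_eq_prod_sigmaBlock]
  refine 𝒜.prod_map_range_T_mul_T_inv (fun k _ => len_mul_of_mem_permIco
    (prod_sigmaBlock_mem_permIco c uu k)
    (permIco_mono le_rfl (hsize k).2 (sigmaBlock_mem_permIco c uu k))) fun k _ => ?_
  refine 𝒜.commute_T_of_mem_permIco (fun i _ hi => ?_)
    (inv_mem (prod_sigmaBlock_mem_permIco c uu k))
  rw [← hblock]
  refine Commute.list_prod_right _ _ fun _ hx => ?_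
  obtain ⟨j, hj, rfl⟩ := List.mem_map.1 hx
  rw [List.mem_range] at hj
  exact (𝒜.commute_T_adj_xiShift_of_lt (by have := hsize k; omega) hi).pow_right _

end HeckeAlgebra

/-- For a 0-1 vector `u ∈ {0,1}^r`, the product
`√(ξ^u) = (1)^{u_1}(T_1)^{u_2}⋯(T_{r−1}⋯T_1)^{u_r}` is reduced (the length of
the underlying permutation `σ(u)` is the length of the word), `√(ξ^u) = T_{σ(u)}`,
and `ξ^u = T_{σ(u)} · T_{σ(u)⁻¹}`.  More generally, for a composition `I` of `n`
and a compatible sequence `uu` of 0-1 vectors, `ξ^{uu} = T_{σ(uu)} · T_{σ(uu)⁻¹}`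
with `σ(uu) ∈ S_I`. -/
theorem xiPow_eq_T_mul_T_inv {n : ℕ} {R : Type} [CommRing R] {q : Rˣ} {H : Type}
    [Ring H] [Algebra R H] (𝒜 : HeckeAlgebra n R q H)
    (r : ℕ) (hr : r ≤ n) (u : ℕ → ℕ) (hu : ∀ j, u j ≤ 1)
    (c : Composition n) (uu : ℕ → ℕ) (huu : ∀ p, uu p ≤ 1) :
    len (sigmaOf n r u) = (∑ i ∈ Finset.range r, u (i + 1) * i) ∧
    𝒜.xiSqrt r u = 𝒜.T (sigmaOf n r u) ∧
    𝒜.xiPow r u = 𝒜.T (sigmaOf n r u) * 𝒜.T (sigmaOf n r u)⁻¹ ∧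
    𝒜.xiUU c uu = 𝒜.T (sigmaUU c uu) * 𝒜.T (sigmaUU c uu)⁻¹ ∧
    sigmaUU c uu ∈ youngSubgroup c :=
  have hu' : ∀ j, u (j + 1) ≤ 1 := fun j => hu (j + 1)
  have hr' : 0 + r ≤ n := by omega
  ⟨len_jmBlockPerm hu' hr', 𝒜.jmBlockSqrt_eq hu' hr', 𝒜.jmBlockXi_eq hu' hr', 𝒜.xiUU_eq c huu,
    sigmaUU_mem_youngSubgroup c uu⟩

end
end HeckePaper
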